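/- arXiv:1403.6210 — 2 statements merged into one kernel-verified Lean document; each statement's English description precedes it below -/
import Mathlib

section
/- The map sending a threshold graph T to its b-vector is a bijection between the set of k-connected threshold graphs on n vertices with clique number d and the set of vectors (b_1,…,b_d) of positive integers summing to n with b_1 = … = b_k = 1. -/
open Finset

/-- Number of cliques of `G` with exactly `i` vertices. -/
noncomputable def cliqueCount {V : Type*} (G : SimpleGraph V) (i : ℕ) : ℕ :=
  {s : Finset V | G.IsNClique i s}.ncard

/-- Clique number: the largest cardinality of a clique of `G`. -/
noncomputable def cliqueNum {V : Type*} (G : SimpleGraph V) : ℕ :=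
  sSup {i : ℕ | ∃ s : Finset V, G.IsNClique i s}

/-- `G` is `k`-connected: it has at least `k` vertices and removing any set of
fewer than `k` vertices leaves a connected graph. -/
def KConnected {V : Type*} [Fintype V] (G : SimpleGraph V) (k : ℕ) : Prop :=
  k ≤ Fintype.card V ∧
    ∀ s : Finset V, s.card < k → (G.induce ((↑s : Set V)ᶜ)).Connected

/-- The connectivity number `κ(G)`: the largest `k` such that `G` is `k`-connected. -/
noncomputable def connectivityNum {V : Type*} [Fintype V] (G : SimpleGraph V) : ℕ :=
  sSup {k : ℕ | KConnected G k}

/-- A graph is chordal if every cycle of length at least four has a chord. -/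
def IsChordal {V : Type*} (G : SimpleGraph V) : Prop :=
  ∀ (v : V) (c : G.Walk v v), c.IsCycle → 4 ≤ c.length →
    ∃ u w, u ∈ c.support ∧ w ∈ c.support ∧ G.Adj u w ∧ s(u, w) ∉ c.edges

/-- The threshold graph built from a word in the alphabet `{S, D}` (here
`true` = `S`, `false` = `D`), where the leftmost letter is the last operation
performed.  Vertex `i` corresponds to the `i`-th letter; two vertices are
adjacent iff the earlier (smaller-index, i.e. later-added) one is a dominating
vertex. -/
def thresholdGraph (w : List Bool) : SimpleGraph (Fin w.length) where
  Adj i j := i ≠ j ∧ w.get (min i j) = true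
  symm := ⟨fun i j h => ⟨h.1.symm, by rw [min_comm]; exact h.2⟩⟩
  loopless := ⟨fun i h => h.1 rfl⟩

/-- A valid threshold word: the final (rightmost) letter, i.e. the first
operation performed, is `S`. -/
def IsThresholdWord (w : List Bool) : Prop := w ≠ [] → w.getLast? = some true

/-- A graph is a threshold graph if it is isomorphic to the graph of some
threshold word. -/
def IsThresholdGraph {V : Type*} (G : SimpleGraph V) : Prop :=
  ∃ w : List Bool, IsThresholdWord w ∧ Nonempty (G ≃g thresholdGraph w)

/-- An abstract simplicial complex on vertex set `V`. -/
structure AbsCx (V : Type*) where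
  faces : Set (Finset V)
  down_closed : ∀ ⦃s t : Finset V⦄, s ∈ faces → t ⊆ s → t ∈ faces

/-- The clique complex of a graph: its faces are the cliques. -/
def cliqueComplex {V : Type*} (G : SimpleGraph V) : AbsCx V :=
  ⟨{s | G.IsClique (↑s : Set V)}, fun s t hs hts => hs.subset (Finset.coe_subset.mpr hts)⟩

/-- The induced subcomplex on a vertex subset `W`. -/
def AbsCx.restrict {V : Type*} (K : AbsCx V) (W : Set V) : AbsCx V :=
  ⟨{s | s ∈ K.faces ∧ (↑s : Set V) ⊆ W},
   fun s t hs hts =>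
     ⟨K.down_closed hs.1 hts, le_trans (Finset.coe_subset.mpr hts) hs.2⟩⟩

/-- A complex is flag if every minimal non-face has exactly two elements. -/
def AbsCx.IsFlag {V : Type*} (K : AbsCx V) : Prop :=
  ∀ s : Finset V, s ∉ K.faces → (∀ t ⊂ s, t ∈ K.faces) → s.card = 2

/-- A complex on `Fin n` is shifted if exchanging a vertex of a face by a
smaller vertex not in the face again yields a face. -/
def AbsCx.IsShifted {n : ℕ} (K : AbsCx (Fin n)) : Prop :=
  ∀ s ∈ K.faces, ∀ i ∈ s, ∀ j, j ∉ s → j < i → insert j (s.erase i) ∈ K.faces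

/-- Faces of (integer) dimension `d`, i.e. of cardinality `d + 1`. -/
def AbsCx.dimFaces {V : Type*} (K : AbsCx V) (d : ℤ) : Type _ :=
  {s : Finset V // s ∈ K.faces ∧ (s.card : ℤ) = d + 1}

/-- The simplicial (augmented) boundary map of a complex, on `d`-dimensional
chains with coefficients in `𝕜`. -/
noncomputable def chainBoundary {V : Type*} [LinearOrder V] (K : AbsCx V)
    (𝕜 : Type*) [Field 𝕜] (d : ℤ) :
    (K.dimFaces d →₀ 𝕜) →ₗ[𝕜] (K.dimFaces (d - 1) →₀ 𝕜) :=
  Finsupp.lsum 𝕜 fun F =>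
    LinearMap.toSpanSingleton 𝕜 _
      (∑ v ∈ F.1.attach,
        ((-1 : 𝕜) ^ (F.1.filter (fun x => x < v.1)).card) •
          Finsupp.single
            (⟨F.1.erase v.1,
              K.down_closed F.2.1 (Finset.erase_subset _ _),
              by
                obtain ⟨hf, hc⟩ := F.2
                have h1 : 1 ≤ F.1.card := Finset.card_pos.mpr ⟨v.1, v.2⟩
                rw [Finset.card_erase_of_mem v.2, Nat.cast_sub h1]
                omega⟩ : K.dimFaces (d - 1))
            (1 : 𝕜))

/-- The dimension of the `d`-th reduced simplicial homology of `K` with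
coefficients in `𝕜` (computed as `dim ker ∂_d − dim im ∂_{d+1}`). -/
noncomputable def AbsCx.homDim {V : Type*} [LinearOrder V] (𝕜 : Type*) [Field 𝕜]
    (K : AbsCx V) (d : ℤ) : ℕ :=
  Module.finrank 𝕜 (LinearMap.ker (chainBoundary K 𝕜 d)) -
    Module.finrank 𝕜 (LinearMap.range (chainBoundary K 𝕜 (d + 1)))

/-- The graded Betti numbers `β_{i,j}` of the Stanley–Reisner ring `𝕜[K]`,
given by Hochster's formula: `β_{i,j} = Σ_{|W| = j} dim_𝕜 H̃_{j-i-1}(K_W)`. -/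
noncomputable def srBetti (𝕜 : Type*) [Field 𝕜] {n : ℕ} (K : AbsCx (Fin n))
    (i j : ℕ) : ℕ :=
  ∑ W ∈ Finset.powersetCard j (Finset.univ : Finset (Fin n)),
    AbsCx.homDim 𝕜 (K.restrict (↑W : Set (Fin n))) ((j : ℤ) - i - 1)

/-- The projective dimension of the Stanley–Reisner ring `𝕜[K]` over the
polynomial ring: the largest homological degree with a nonzero Betti number. -/
noncomputable def srProjDim (𝕜 : Type*) [Field 𝕜] {n : ℕ} (K : AbsCx (Fin n)) : ℕ :=
  sSup {i : ℕ | ∃ j : ℕ, srBetti 𝕜 K i j ≠ 0}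

/-- The depth of the Stanley–Reisner ring `𝕜[K]`, via the
Auslander–Buchsbaum formula `depth = n − projdim`. -/
noncomputable def srDepth (𝕜 : Type*) [Field 𝕜] {n : ℕ} (K : AbsCx (Fin n)) : ℕ :=
  n - srProjDim 𝕜 K

/-- The lengths of the blocks obtained by splitting a threshold word
immediately after each `S` (= `true`); the `b`-vector of the word. -/
def blocks : List Bool → List ℕ
  | [] => []
  | true :: rest => 1 :: blocks rest
  | false :: rest =>
    match blocks rest with
    | [] => []
    | b :: bs => (b + 1) :: bs

/-- One plus the dimension of a complex: the largest cardinality of a face. -/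
noncomputable def AbsCx.dimPlusOne {V : Type*} (K : AbsCx V) : ℕ :=
  sSup {c : ℕ | ∃ s ∈ K.faces, s.card = c}

/-- `K` is Cohen–Macaulay over `𝕜` iff the depth of `𝕜[K]` equals its Krull
dimension `dim K + 1`. -/
def IsCohenMacaulay (𝕜 : Type*) [Field 𝕜] {n : ℕ} (K : AbsCx (Fin n)) : Prop :=
  srDepth 𝕜 K = K.dimPlusOne

/-- The Alexander dual complex. -/
def AbsCx.dual {n : ℕ} (K : AbsCx (Fin n)) : AbsCx (Fin n) :=
  ⟨{s | Finset.univ \ s ∉ K.faces},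
   fun s t hs hts h => hs (K.down_closed h (Finset.sdiff_subset_sdiff (le_refl _) hts))⟩

/-- The number of faces of `K` with exactly `i` vertices (the `f`-vector). -/
noncomputable def AbsCx.faceCount {V : Type*} (K : AbsCx V) (i : ℕ) : ℕ :=
  {s ∈ K.faces | s.card = i}.ncard

/-!
Writing a block of length `b` as `D^(b-1) S`, the map `wordOfBlocks` inverts `blocks` between
words ending in `S` and vectors of positive integers. Under this correspondence the length of the
word is the sum of the vector and the number of `S` letters is its length. That number is the
clique number: the `S`-vertices form a clique, and a clique contains at most one `D`-vertex, its
largest one. Finally the graph is `k`-connected iff its first `k` letters are `S`: if letter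
`i < k` is a `D` that is not the last letter, deleting the `i` vertices before it isolates it;
otherwise, after deleting fewer than `k` vertices the smallest remaining vertex is an `S` and
dominates the others.
-/

def wordOfBlocks : List ℕ → List Bool
  | [] => []
  | b :: l => List.replicate (b - 1) false ++ true :: wordOfBlocks l

lemma blocks_replicate_false_append (m : ℕ) (r : List Bool) :
    blocks (List.replicate m false ++ true :: r) = (m + 1) :: blocks r := by
  induction m with
  | zero => rfl
  | succ m ih => simp only [List.replicate_succ, List.cons_append, blocks, ih]

lemma blocks_wordOfBlocks {l : List ℕ} (hl : ∀ x ∈ l, 0 < x) :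
    blocks (wordOfBlocks l) = l := by
  induction l with
  | nil => rfl
  | cons b l ih =>
    simp only [List.mem_cons, forall_eq_or_imp] at hl
    rw [wordOfBlocks, blocks_replicate_false_append, ih hl.2, Nat.sub_add_cancel hl.1]

lemma length_wordOfBlocks {l : List ℕ} (hl : ∀ x ∈ l, 0 < x) :
    (wordOfBlocks l).length = l.sum := by
  induction l with
  | nil => rfl
  | cons b l ih =>
    simp only [List.mem_cons, forall_eq_or_imp] at hl
    simp only [wordOfBlocks, List.length_append, List.length_replicate, List.length_cons,
      ih hl.2, List.sum_cons]
    omega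

lemma count_wordOfBlocks (l : List ℕ) : (wordOfBlocks l).count true = l.length := by
  induction l with
  | nil => rfl
  | cons b l ih => simp [wordOfBlocks, List.count_replicate, ih]

lemma isThresholdWord_wordOfBlocks (l : List ℕ) : IsThresholdWord (wordOfBlocks l) := by
  induction l with
  | nil => simp [IsThresholdWord, wordOfBlocks]
  | cons b l ih =>
    intro _
    rw [wordOfBlocks, List.getLast?_append_of_ne_nil _ (List.cons_ne_nil _ _), List.getLast?_cons]
    rcases eq_or_ne (wordOfBlocks l) [] with h | h
    · simp [h]
    · simp [ih h]

lemma IsThresholdWord.of_cons {a : Bool} {r : List Bool} (hw : IsThresholdWord (a :: r)) :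
    IsThresholdWord r := by
  rintro hr
  obtain ⟨c, r, rfl⟩ := List.exists_cons_of_ne_nil hr
  simpa using hw (List.cons_ne_nil _ _)

lemma IsThresholdWord.exists_eq_wordOfBlocks {w : List Bool} (hw : IsThresholdWord w) :
    ∃ l : List ℕ, (∀ x ∈ l, 0 < x) ∧ wordOfBlocks l = w := by
  induction w with
  | nil => exact ⟨[], by simp, rfl⟩
  | cons a r ih =>
    obtain ⟨l, hl, rfl⟩ := ih hw.of_cons
    cases a with
    | true => exact ⟨1 :: l, by simpa using hl, rfl⟩
    | false =>
      obtain ⟨b, l, rfl⟩ : ∃ b l', l = b :: l' := by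
        refine List.exists_cons_of_ne_nil ?_
        rintro rfl
        simpa [wordOfBlocks] using hw (List.cons_ne_nil _ _)
      simp only [List.mem_cons, forall_eq_or_imp] at hl
      refine ⟨(b + 1) :: l, by simpa using hl.2, ?_⟩
      obtain ⟨c, rfl⟩ := Nat.exists_eq_add_of_lt hl.1
      simp [wordOfBlocks, List.replicate_succ]

lemma bijOn_blocks : Set.BijOn blocks {w | IsThresholdWord w} {l | ∀ x ∈ l, 0 < x} := by
  refine Set.InvOn.bijOn (f' := wordOfBlocks) ⟨?_, fun l hl => blocks_wordOfBlocks hl⟩ ?_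
    fun l _ => isThresholdWord_wordOfBlocks l
  · rintro w hw
    obtain ⟨l, hl, rfl⟩ := IsThresholdWord.exists_eq_wordOfBlocks hw
    rw [blocks_wordOfBlocks hl]
  · rintro w hw
    obtain ⟨l, hl, rfl⟩ := IsThresholdWord.exists_eq_wordOfBlocks hw
    rwa [Set.mem_ofPred_eq, blocks_wordOfBlocks hl]

lemma forall_getD_wordOfBlocks_iff {l : List ℕ} (hl : ∀ x ∈ l, 0 < x) (k : ℕ) :
    (∀ i < k, (wordOfBlocks l).getD i false = true) ↔ ∀ i < k, l.getD i 0 = 1 := by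
  induction k generalizing l with
  | zero => simp
  | succ k ih =>
    rw [Nat.forall_lt_succ_left, Nat.forall_lt_succ_left]
    cases l with
    | nil => simp [wordOfBlocks]
    | cons b l =>
      simp only [List.mem_cons, forall_eq_or_imp] at hl
      obtain ⟨c, rfl⟩ := Nat.exists_eq_add_of_lt hl.1
      cases c with
      | zero => simpa [wordOfBlocks] using ih hl.2
      | succ c => simp [wordOfBlocks, List.replicate_succ]

lemma IsThresholdWord.sum_blocks {w : List Bool} (hw : IsThresholdWord w) :
    (blocks w).sum = w.length := by
  obtain ⟨l, hl, rfl⟩ := hw.exists_eq_wordOfBlocks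
  rw [blocks_wordOfBlocks hl, length_wordOfBlocks hl]

lemma IsThresholdWord.length_blocks {w : List Bool} (hw : IsThresholdWord w) :
    (blocks w).length = w.count true := by
  obtain ⟨l, hl, rfl⟩ := hw.exists_eq_wordOfBlocks
  rw [blocks_wordOfBlocks hl, count_wordOfBlocks]

lemma IsThresholdWord.forall_getD_blocks_iff {w : List Bool} (hw : IsThresholdWord w) (k : ℕ) :
    (∀ i < k, (blocks w).getD i 0 = 1) ↔ ∀ i < k, w.getD i false = true := by
  obtain ⟨l, hl, rfl⟩ := hw.exists_eq_wordOfBlocks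
  rw [blocks_wordOfBlocks hl, forall_getD_wordOfBlocks_iff hl]

lemma thresholdGraph_adj_of_lt {w : List Bool} {i j : Fin w.length} (hij : i < j) :
    (thresholdGraph w).Adj i j ↔ w.get i = true := by
  change i ≠ j ∧ w.get (min i j) = true ↔ _
  rw [min_eq_left hij.le]
  simp [hij.ne]

lemma connected_induce_compl_of_get_eq_true {w : List Bool} {s : Finset (Fin w.length)}
    {m : Fin w.length} (hm : m ∉ s) (hmin : ∀ x ∉ s, m ≤ x) (hwm : w.get m = true) :
    ((thresholdGraph w).induce (↑s : Set (Fin w.length))ᶜ).Connected := by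
  refine SimpleGraph.Connected.of_isUniversal (v := ⟨m, hm⟩) fun x hx => ?_
  have hmx : m < x.1 := lt_of_le_of_ne (hmin x.1 x.2) fun h => hx (Subtype.ext h)
  exact (thresholdGraph_adj_of_lt hmx).2 hwm

lemma not_connected_induce_compl_Iio_of_get_eq_false {w : List Bool} {i : Fin w.length}
    (hi : w.get i = false) (hnext : i.val + 1 < w.length) :
    ¬ ((thresholdGraph w).induce (↑(Finset.Iio i) : Set (Fin w.length))ᶜ).Connected := by
  intro hconn
  let next : Fin w.length := ⟨i.val + 1, hnext⟩
  have : Nontrivial ((↑(Finset.Iio i) : Set (Fin w.length))ᶜ : Set _) :=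
    ⟨⟨i, by simp⟩, ⟨next, by simp [next, Fin.le_def]⟩,
      fun h => by simpa [next] using congrArg (·.1.val) h⟩
  refine hconn.preconnected.not_isIsolated ⟨i, by simp⟩ fun x hx => ?_
  have hix : i < x.1 := lt_of_le_of_ne (by simpa using x.2) fun h => hx.ne (Subtype.ext h)
  have hwi : w.get i = true := (thresholdGraph_adj_of_lt hix).1 hx
  rw [hi] at hwi
  exact Bool.false_ne_true hwi

lemma IsThresholdWord.get_last {w : List Bool} (hw : IsThresholdWord w) (h : 0 < w.length) :
    w.get ⟨w.length - 1, Nat.sub_one_lt_of_lt h⟩ = true := by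
  have hlast := hw (List.ne_nil_of_length_pos h)
  rwa [List.getLast?_eq_getElem?, List.getElem?_eq_getElem, Option.some_inj] at hlast

lemma card_filter_get_eq_true (w : List Bool) :
    (Finset.univ.filter fun i : Fin w.length => w.get i = true).card = w.count true :=
  Fin.card_filter_univ_eq_vector_get_eq_count true ⟨w, rfl⟩

lemma isClique_thresholdGraph_setOf_get_eq_true (w : List Bool) :
    (thresholdGraph w).IsClique {i | w.get i = true} := by
  intro i hi j hj hij
  rcases hij.lt_or_gt with hij | hji
  · exact (thresholdGraph_adj_of_lt hij).2 hi
  · exact ((thresholdGraph_adj_of_lt hji).2 hj).symm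

lemma IsThresholdWord.card_le_count_of_isClique {w : List Bool} (hw : IsThresholdWord w)
    {s : Finset (Fin w.length)} (hs : (thresholdGraph w).IsClique (s : Set (Fin w.length))) :
    s.card ≤ w.count true := by
  rw [← card_filter_get_eq_true]
  rcases s.eq_empty_or_nonempty with rfl | hne
  · simp
  set m := s.max' hne
  have hm : m ∈ s := s.max'_mem hne
  have hlt : ∀ x ∈ s.erase m, x < m := fun x hx =>
    lt_of_le_of_ne (s.le_max' x (Finset.mem_of_mem_erase hx)) (Finset.ne_of_mem_erase hx)
  have herase : ∀ x ∈ s.erase m, w.get x = true := fun x hx =>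
    (thresholdGraph_adj_of_lt (hlt x hx)).1 (hs (Finset.mem_of_mem_erase hx) hm (hlt x hx).ne)
  by_cases hwm : w.get m = true
  · refine Finset.card_le_card fun x hx => ?_
    rw [Finset.mem_filter]
    refine ⟨Finset.mem_univ x, ?_⟩
    rcases eq_or_ne x m with rfl | hxm
    · exact hwm
    · exact herase x (Finset.mem_erase.2 ⟨hxm, hx⟩)
  · -- replacing `m` by the last vertex, which is an `S`-vertex, gives a set of `S`-vertices
    let last : Fin w.length := ⟨w.length - 1, Nat.sub_one_lt_of_lt m.pos⟩
    have hlast : last ∉ s.erase m := fun h => (hlt last h).not_ge (Nat.le_sub_one_of_lt m.isLt)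
    calc s.card = (insert last (s.erase m)).card := by
          rw [Finset.card_insert_of_notMem hlast, Finset.card_erase_add_one hm]
      _ ≤ _ := by
          refine Finset.card_le_card (Finset.insert_subset ?_ fun x hx => ?_) <;>
            rw [Finset.mem_filter]
          · exact ⟨Finset.mem_univ _, hw.get_last m.pos⟩
          · exact ⟨Finset.mem_univ _, herase x hx⟩

lemma IsThresholdWord.cliqueNum_thresholdGraph {w : List Bool} (hw : IsThresholdWord w) :
    cliqueNum (thresholdGraph w) = w.count true := by
  refine IsGreatest.csSup_eq ⟨⟨_, ⟨?_, card_filter_get_eq_true w⟩⟩, ?_⟩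
  · simpa using isClique_thresholdGraph_setOf_get_eq_true w
  · rintro i ⟨s, hs⟩
    exact hs.card_eq ▸ hw.card_le_count_of_isClique hs.isClique

lemma IsThresholdWord.kConnected_thresholdGraph_iff {w : List Bool} (hw : IsThresholdWord w)
    (k : ℕ) : KConnected (thresholdGraph w) k ↔ ∀ i < k, w.getD i false = true := by
  constructor
  · rintro ⟨hkn, hconn⟩ i hik
    rw [Fintype.card_fin] at hkn
    have hin : i < w.length := hik.trans_le hkn
    rw [List.getD_eq_getElem _ _ hin]
    by_cases hnext : i + 1 < w.length
    · by_contra hwi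
      refine not_connected_induce_compl_Iio_of_get_eq_false (i := ⟨i, hin⟩) (by simpa using hwi)
        hnext (hconn _ ?_)
      rwa [Fin.card_Iio]
    · obtain rfl : i = w.length - 1 := by omega
      exact hw.get_last (by omega)
  · intro h
    have hkn : k ≤ w.length := by
      by_contra! hlt
      simpa using h w.length hlt
    refine ⟨by rwa [Fintype.card_fin], fun s hs => ?_⟩
    have hne : sᶜ.Nonempty := by
      rw [← Finset.card_pos, Finset.card_compl, Fintype.card_fin]
      omega
    set m := sᶜ.min' hne
    have hmin : ∀ x ∉ s, m ≤ x := fun x hx => sᶜ.min'_le x (Finset.mem_compl.2 hx)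
    have hIio : Finset.Iio m ⊆ s := fun x hx => by
      by_contra hxs
      exact (Finset.mem_Iio.1 hx).not_ge (hmin x hxs)
    have hmk : m.val < k := (Fin.card_Iio m ▸ Finset.card_le_card hIio).trans_lt hs
    refine connected_induce_compl_of_get_eq_true (Finset.mem_compl.1 (sᶜ.min'_mem hne)) hmin ?_
    simpa [List.getD_eq_getElem] using h m hmk

/-- `T ↦ b(T)` is a bijection between `k`-connected threshold
graphs on `n` vertices with clique number `d` (represented by their words) and
positive integer vectors of length `d` summing to `n` whose first `k` entries
equal `1`. -/
theorem bVector_bijective (n d k : ℕ) :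
    Set.BijOn blocks
      {w : List Bool | IsThresholdWord w ∧ w.length = n ∧
        cliqueNum (thresholdGraph w) = d ∧ KConnected (thresholdGraph w) k}
      {l : List ℕ | l.length = d ∧ (∀ x ∈ l, 0 < x) ∧
        (∀ i, i < k → l.getD i 0 = 1) ∧ l.sum = n} := by
  let bVectorConditions : Set (List ℕ) :=
    {l | l.length = d ∧ (∀ i < k, l.getD i 0 = 1) ∧ l.sum = n}
  convert bijOn_blocks.inter_mapsTo (Set.mapsTo_preimage blocks bVectorConditions)
    Set.inter_subset_right using 1
  · ext w
    simp only [bVectorConditions, Set.mem_ofPred_eq, Set.mem_inter_iff, Set.mem_preimage]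
    refine and_congr_right fun hw => ?_
    rw [hw.cliqueNum_thresholdGraph, hw.kConnected_thresholdGraph_iff, hw.forall_getD_blocks_iff,
      hw.sum_blocks, hw.length_blocks]
    tauto
  · ext l
    simp only [bVectorConditions, Set.mem_ofPred_eq, Set.mem_inter_iff]
    tauto
end

section
/- If the Stanley–Reisner ring 𝕜[Δ(G)] of the clique complex of a graph G on n vertices has projective dimension p over 𝕜[x_1,…,x_n], then G is (n−p−1)-connected. -/
open Finset

/-!
If deleting fewer than `n - p - 1` vertices disconnects `G`, the remaining set `W` has at least
`p + 2` vertices and the induced subcomplex `Δ(G)_W = Δ(G[W])` is disconnected, so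
`H̃₀(Δ(G)_W) ≠ 0`. By Hochster's formula this gives `β_{|W|-1,|W|} ≠ 0`, hence
`p ≥ |W| - 1 ≥ p + 1`, a contradiction.

`H̃₀` is detected by linear functionals on `0`-chains: a vertex weight `w` that is constant along
edges kills every boundary `∂{a,b} = b - a`, while it does not vanish on the cycle `u - v` when
`w u ≠ w v`; the constant weight `1` recovers the augmentation `∂₀`.
-/

namespace AbsCx

variable {V : Type*} [LinearOrder V] {𝕜 : Type*} [Field 𝕜] (K : AbsCx V)

noncomputable def weightSum (w : V → 𝕜) (d : ℤ) : (K.dimFaces d →₀ 𝕜) →ₗ[𝕜] 𝕜 :=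
  Finsupp.lsum 𝕜 fun F => LinearMap.toSpanSingleton 𝕜 𝕜 (∑ x ∈ F.1, w x)

omit [LinearOrder V] in
@[simp]
lemma weightSum_single (w : V → 𝕜) (d : ℤ) (F : K.dimFaces d) :
    K.weightSum w d (Finsupp.single F 1) = ∑ x ∈ F.1, w x := by
  rw [weightSum, Finsupp.lsum_single, LinearMap.toSpanSingleton_apply, one_smul]

def facet {d : ℤ} (F : K.dimFaces d) (v : V) (hv : v ∈ F.1) : K.dimFaces (d - 1) :=
  ⟨F.1.erase v, K.down_closed F.2.1 (Finset.erase_subset _ _), by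
    have := F.2.2
    have := Finset.card_pos.mpr ⟨v, hv⟩
    rw [Finset.card_erase_of_mem hv]
    omega⟩

@[simp]
lemma facet_val {d : ℤ} (F : K.dimFaces d) (v : V) (hv : v ∈ F.1) :
    (K.facet F v hv).1 = F.1.erase v :=
  rfl

lemma chainBoundary_single {d : ℤ} (F : K.dimFaces d) :
    chainBoundary K 𝕜 d (Finsupp.single F 1) =
      ∑ v ∈ F.1.attach, (-1 : 𝕜) ^ (F.1.filter (· < v.1)).card •
        Finsupp.single (K.facet F v.1 v.2) 1 := by
  rw [chainBoundary, Finsupp.lsum_single, LinearMap.toSpanSingleton_apply, one_smul]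
  rfl

lemma weightSum_chainBoundary_single (w : V → 𝕜) (d : ℤ) (F : K.dimFaces d) :
    K.weightSum w (d - 1) (chainBoundary K 𝕜 d (Finsupp.single F 1)) =
      ∑ v ∈ F.1, (-1 : 𝕜) ^ (F.1.filter (· < v)).card * ∑ x ∈ F.1.erase v, w x := by
  rw [chainBoundary_single, map_sum]
  simp only [map_smul, weightSum_single, facet_val, smul_eq_mul]
  exact Finset.sum_attach F.1 fun v =>
    (-1 : 𝕜) ^ (F.1.filter (· < v)).card * ∑ x ∈ F.1.erase v, w x

lemma weightSum_comp_chainBoundary_one {w : V → 𝕜}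
    (hw : ∀ a b, ({a, b} : Finset V) ∈ K.faces → w a = w b) :
    K.weightSum w 0 ∘ₗ chainBoundary K 𝕜 1 = 0 := by
  refine Finsupp.lhom_ext' fun F => LinearMap.ext_ring ?_
  obtain ⟨a, b, hab, hF⟩ := Finset.card_eq_two.mp (by exact_mod_cast F.2.2)
  wlog hlt : a < b generalizing a b
  · exact this b a hab.symm (by rw [hF, Finset.pair_comm]) (hab.lt_or_gt.resolve_left hlt)
  have hwab : w a = w b := hw a b (hF ▸ F.2.1)
  change K.weightSum w (1 - 1) (chainBoundary K 𝕜 1 (Finsupp.single F 1)) = 0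
  rw [weightSum_chainBoundary_single, hF, Finset.sum_pair hab]
  simp [Finset.filter_insert, Finset.filter_singleton, hlt, hlt.not_gt, hab, hab.symm, hwab]

omit [LinearOrder V] in
instance subsingleton_dimFaces_neg_one : Subsingleton (K.dimFaces (0 - 1)) :=
  ⟨fun F G => Subtype.ext <| by
    have hF := F.2.2
    have hG := G.2.2
    exact (Finset.card_eq_zero.mp (by omega)).trans (Finset.card_eq_zero.mp (by omega)).symm⟩

lemma chainBoundary_zero_eq (e : K.dimFaces (0 - 1)) :
    chainBoundary K 𝕜 0 = (K.weightSum 1 0).smulRight (Finsupp.single e 1) := by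
  refine Finsupp.lhom_ext' fun F => LinearMap.ext_ring ?_
  have hF : F.1.card = 1 := by exact_mod_cast F.2.2
  change chainBoundary K 𝕜 0 (Finsupp.single F 1) =
    (K.weightSum 1 0).smulRight (Finsupp.single e 1) (Finsupp.single F 1)
  have hsign : ∀ v ∈ F.1, F.1.filter (· < v) = ∅ := fun v hv =>
    Finset.filter_eq_empty_iff.mpr fun x hx => (Finset.card_le_one.mp hF.le x hx v hv).not_lt
  rw [LinearMap.smulRight_apply, weightSum_single, chainBoundary_single]
  simp [hsign, hF, Subsingleton.elim _ e]

lemma homDim_eq_zero_of_lt_neg_one {d : ℤ} (hd : d < -1) : K.homDim 𝕜 d = 0 := by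
  have : IsEmpty (K.dimFaces d) := ⟨fun F => by have := F.2.2; omega⟩
  rw [homDim, Module.finrank_zero_of_subsingleton, Nat.zero_sub]

variable [Finite V]

instance (d : ℤ) : Finite (K.dimFaces d) := Subtype.finite

lemma homDim_zero_ne_zero (w : V → 𝕜) (hw : ∀ a b, ({a, b} : Finset V) ∈ K.faces → w a = w b)
    {u v : V} (hu : {u} ∈ K.faces) (hv : {v} ∈ K.faces) (huv : w u ≠ w v) :
    K.homDim 𝕜 0 ≠ 0 := by
  let e : K.dimFaces (0 - 1) := ⟨∅, K.down_closed hu (Finset.empty_subset _), by simp⟩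
  let su : K.dimFaces 0 := ⟨{u}, hu, by simp⟩
  let sv : K.dimFaces 0 := ⟨{v}, hv, by simp⟩
  let x : K.dimFaces 0 →₀ 𝕜 := Finsupp.single su 1 - Finsupp.single sv 1
  have hker : LinearMap.ker (K.weightSum 1 0) ≤ LinearMap.ker (chainBoundary K 𝕜 0) := by
    intro y hy
    rw [LinearMap.mem_ker, chainBoundary_zero_eq K e, LinearMap.smulRight_apply,
      LinearMap.mem_ker.mp hy, zero_smul]
  have hx : x ∈ LinearMap.ker (chainBoundary K 𝕜 0) := hker <| by
    rw [LinearMap.mem_ker, map_sub, weightSum_single, weightSum_single]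
    simp [su, sv]
  have hxw : x ∉ LinearMap.ker (K.weightSum w 0) := by
    rw [LinearMap.mem_ker, map_sub, weightSum_single, weightSum_single]
    simpa [su, sv, sub_eq_zero] using huv
  have hrange : LinearMap.range (chainBoundary K 𝕜 (0 + 1)) ≤
      LinearMap.ker (chainBoundary K 𝕜 0) ⊓ LinearMap.ker (K.weightSum w 0) :=
    le_inf ((LinearMap.range_le_ker_iff.mpr (K.weightSum_comp_chainBoundary_one
      fun _ _ _ => rfl)).trans hker)
      (LinearMap.range_le_ker_iff.mpr (K.weightSum_comp_chainBoundary_one hw))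
  have hlt : LinearMap.ker (chainBoundary K 𝕜 0) ⊓ LinearMap.ker (K.weightSum w 0) <
      LinearMap.ker (chainBoundary K 𝕜 0) :=
    inf_le_left.lt_of_not_ge fun h => hxw (h hx).2
  exact Nat.sub_ne_zero_of_lt <|
    (Submodule.finrank_mono hrange).trans_lt (Submodule.finrank_lt_finrank_of_lt hlt)

end AbsCx

/-- The separating weight is the indicator of the component of `u` in `G[W]`. -/
lemma homDim_zero_cliqueComplex_restrict_ne_zero {V : Type*} [LinearOrder V] [Finite V]
    (𝕜 : Type*) [Field 𝕜] (G : SimpleGraph V) {W : Set V}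
    (hW : ¬ (G.induce W).Preconnected) :
    ((cliqueComplex G).restrict W).homDim 𝕜 0 ≠ 0 := by
  classical
  obtain ⟨u, v, huv⟩ : ∃ u v, ¬ (G.induce W).Reachable u v := by
    simpa [SimpleGraph.Preconnected] using hW
  let w : V → 𝕜 := fun x => if hx : x ∈ W then if (G.induce W).Reachable u ⟨x, hx⟩ then 1 else 0
    else 0
  have hw : ∀ a b, ({a, b} : Finset V) ∈ ((cliqueComplex G).restrict W).faces → w a = w b := by
    rintro a b ⟨hclique, hsub⟩
    rcases eq_or_ne a b with rfl | hab
    · rfl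
    have ha : a ∈ W := hsub (by simp)
    have hb : b ∈ W := hsub (by simp)
    have hadj : (G.induce W).Adj ⟨a, ha⟩ ⟨b, hb⟩ := hclique (by simp) (by simp) hab
    have hiff : (G.induce W).Reachable u ⟨a, ha⟩ ↔ (G.induce W).Reachable u ⟨b, hb⟩ :=
      ⟨fun h => h.trans hadj.reachable, fun h => h.trans hadj.symm.reachable⟩
    simp only [w, ha, hb, dite_true, hiff]
  have hsingle : ∀ x : W, ({x.1} : Finset V) ∈ ((cliqueComplex G).restrict W).faces :=
    fun x => ⟨by simp [cliqueComplex], by simp⟩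
  refine AbsCx.homDim_zero_ne_zero _ w hw (hsingle u) (hsingle v) ?_
  simp [w, huv]

section Betti

variable {𝕜 : Type*} [Field 𝕜] {n : ℕ} (K : AbsCx (Fin n))

lemma srBetti_eq_zero_of_lt {i j : ℕ} (hij : j < i) : srBetti 𝕜 K i j = 0 :=
  Finset.sum_eq_zero fun _ _ => (K.restrict _).homDim_eq_zero_of_lt_neg_one (by omega)

lemma srBetti_eq_zero_of_lt_card {i j : ℕ} (hj : n < j) : srBetti 𝕜 K i j = 0 := by
  rw [srBetti, Finset.powersetCard_eq_empty.mpr (by simpa using hj), Finset.sum_empty]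

lemma bddAbove_srBetti_ne_zero : BddAbove {i | ∃ j, srBetti 𝕜 K i j ≠ 0} := by
  refine ⟨n, fun i ⟨j, hij⟩ => ?_⟩
  have hi : i ≤ j := not_lt.mp fun h => hij (srBetti_eq_zero_of_lt K h)
  have hj : j ≤ n := not_lt.mp fun h => hij (srBetti_eq_zero_of_lt_card K h)
  exact hi.trans hj

lemma le_srProjDim {i j : ℕ} (h : srBetti 𝕜 K i j ≠ 0) : i ≤ srProjDim 𝕜 K :=
  le_csSup (bddAbove_srBetti_ne_zero K) ⟨j, h⟩

lemma srBetti_card_ne_zero {i : ℕ} (W : Finset (Fin n))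
    (h : (K.restrict W).homDim 𝕜 ((W.card : ℤ) - i - 1) ≠ 0) : srBetti 𝕜 K i W.card ≠ 0 :=
  fun h0 => h (Finset.sum_eq_zero_iff.mp h0 W (Finset.mem_powersetCard_univ.mpr rfl))

end Betti

theorem kConnected_of_projDim_general (𝕜 : Type*) [Field 𝕜] {n : ℕ}
    (G : SimpleGraph (Fin n)) (p : ℕ)
    (hp : srProjDim 𝕜 (cliqueComplex G) = p) :
    KConnected G (n - p - 1) := by
  refine ⟨by simp only [Fintype.card_fin]; omega, fun s hs => ?_⟩
  by_contra hdisc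
  rw [← Finset.coe_compl] at hdisc
  have hcard : p + 2 ≤ sᶜ.card := by
    rw [Finset.card_compl, Fintype.card_fin]
    omega
  have hne : (sᶜ : Finset (Fin n)).Nonempty := Finset.card_pos.mp (by omega)
  have hpre : ¬ (G.induce (sᶜ : Finset (Fin n))).Preconnected := fun h =>
    hdisc ((SimpleGraph.connected_iff _).mpr ⟨h, hne.coe_sort⟩)
  have hbetti : srBetti 𝕜 (cliqueComplex G) (sᶜ.card - 1) sᶜ.card ≠ 0 := by
    refine srBetti_card_ne_zero _ _ ?_
    rw [show (sᶜ.card : ℤ) - (sᶜ.card - 1 : ℕ) - 1 = 0 by omega]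
    exact homDim_zero_cliqueComplex_restrict_ne_zero 𝕜 G hpre
  have hle : sᶜ.card - 1 ≤ srProjDim 𝕜 (cliqueComplex G) := le_srProjDim _ hbetti
  omega

/-- if `𝕜[Δ(G)]` has projective dimension `p`, then `G` is
`(n - p - 1)`-connected. -/
theorem kConnected_of_projDim (𝕜 : Type*) [Field 𝕜] [CharZero 𝕜] {n : ℕ}
    (G : SimpleGraph (Fin n)) (p : ℕ)
    (hp : srProjDim 𝕜 (cliqueComplex G) = p) :
    KConnected G (n - p - 1) :=
  kConnected_of_projDim_general 𝕜 G p hp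
end
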